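/- arXiv:1503.04279 — 3 statements merged into one kernel-verified Lean document; each statement's English description precedes it below -/
import Mathlib

section
/- Let g be a Lie algebra over a field with a B-orthogonal decomposition g = k ⊕ m₁ ⊕ m₂ ⊕ m₃ where k is a subalgebra, [k, mᵢ] ⊆ mᵢ, [mᵢ, mᵢ] ⊆ k, and the Killing form B is nondegenerate. Then [m₁, m₃] ⊆ m₂ and [m₂, m₃] ⊆ m₁. -/
/-!
Invariance of the Killing form `B` moves brackets across it: for `x ∈ m₁`, `y ∈ m₃` and `z` in
`k`, `m₁` or `m₃`, the value `B z ⁅x, y⁆` becomes `B` of an element of one of these subspaces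
against an element of another, which vanishes. So `⁅x, y⁆` is orthogonal to `k ⊕ m₁ ⊕ m₃`, and by
nondegeneracy this orthogonal complement is exactly `m₂`. The same argument with `m₁` and `m₂`
exchanged gives `[m₂, m₃] ⊆ m₁`.
-/

namespace LinearMap.BilinForm

variable {R M : Type*} [CommRing R] [AddCommGroup M] [Module R M] {B : LinearMap.BilinForm R M}

theorem orthogonal_sup (B : LinearMap.BilinForm R M) (N L : Submodule R M) :
    B.orthogonal (N ⊔ L) = B.orthogonal N ⊓ B.orthogonal L := by
  refine le_antisymm (le_inf (orthogonal_le le_sup_left) (orthogonal_le le_sup_right)) ?_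
  rintro x ⟨hN, hL⟩ n hn
  obtain ⟨a, ha, b, hb, rfl⟩ := Submodule.mem_sup.mp hn
  simp [hN a ha, hL b hb]

theorem orthogonal_le_of_sup_eq_top (hB : B.IsRefl) (hnd : B.Nondegenerate)
    {p q : Submodule R M} (hpq : p ⊔ q = ⊤) (hq : q ≤ B.orthogonal p) :
    B.orthogonal p ≤ q := by
  intro w hw
  obtain ⟨a, ha, b, hb, rfl⟩ := Submodule.mem_sup.mp (hpq ▸ Submodule.mem_top : w ∈ p ⊔ q)
  have ha_p : a ∈ B.orthogonal p := by
    simpa using (B.orthogonal p).sub_mem hw (hq hb)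
  have ha_q : a ∈ B.orthogonal q := fun n hn => hB _ _ (hq hn a ha)
  have ha0 : a ∈ B.orthogonal ⊤ := by
    rw [← hpq, orthogonal_sup]
    exact ⟨ha_p, ha_q⟩
  rw [orthogonal_top_eq_bot hnd, Submodule.mem_bot] at ha0
  simpa [ha0] using hb

end LinearMap.BilinForm

open LinearMap.BilinForm

section InvariantForm

variable {R L : Type*} [CommRing R] [LieRing L] [Module R L] {Φ : LinearMap.BilinForm R L}
  {k m n : Submodule R L}

theorem lie_mem_orthogonal_sup (hΦ : Φ.lieInvariant L)
    (hkn : ∀ x ∈ k, ∀ y ∈ n, ⁅x, y⁆ ∈ n)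
    (hmm : ∀ x ∈ m, ∀ y ∈ m, ⁅x, y⁆ ∈ k) (hnn : ∀ x ∈ n, ∀ y ∈ n, ⁅x, y⁆ ∈ k)
    (hmk : m ≤ Φ.orthogonal k) (hnk : n ≤ Φ.orthogonal k) (hmn : m ≤ Φ.orthogonal n)
    {x y : L} (hx : x ∈ m) (hy : y ∈ n) :
    ⁅x, y⁆ ∈ Φ.orthogonal (k ⊔ m ⊔ n) := by
  have via_y (z : L) : Φ z ⁅x, y⁆ = Φ ⁅y, z⁆ x := by
    rw [hΦ, ← lie_skew x y, map_neg]
  have via_x (z : L) : Φ z ⁅x, y⁆ = -Φ ⁅x, z⁆ y := by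
    rw [hΦ, neg_neg]
  simp only [orthogonal_sup]
  refine ⟨⟨fun z hz => ?_, fun z hz => ?_⟩, fun z hz => ?_⟩
  · have hyz : ⁅y, z⁆ ∈ n := by
      rw [← lie_skew]
      exact n.neg_mem (hkn z hz y hy)
    rw [via_y]
    exact hmn hx _ hyz
  · rw [via_x, hnk hy _ (hmm x hx z hz), neg_zero]
  · rw [via_y]
    exact hmk hx _ (hnn y hy z hz)

theorem lie_mem_of_orthogonal_sup_eq_top (hΦ : Φ.lieInvariant L) (hrefl : Φ.IsRefl)
    (hnd : Φ.Nondegenerate) {r : Submodule R L} (hspan : k ⊔ m ⊔ n ⊔ r = ⊤)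
    (hkn : ∀ x ∈ k, ∀ y ∈ n, ⁅x, y⁆ ∈ n)
    (hmm : ∀ x ∈ m, ∀ y ∈ m, ⁅x, y⁆ ∈ k) (hnn : ∀ x ∈ n, ∀ y ∈ n, ⁅x, y⁆ ∈ k)
    (hmk : m ≤ Φ.orthogonal k) (hnk : n ≤ Φ.orthogonal k) (hmn : m ≤ Φ.orthogonal n)
    (hr : r ≤ Φ.orthogonal (k ⊔ m ⊔ n)) {x y : L} (hx : x ∈ m) (hy : y ∈ n) :
    ⁅x, y⁆ ∈ r :=
  orthogonal_le_of_sup_eq_top hrefl hnd hspan hr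
    (lie_mem_orthogonal_sup hΦ hkn hmm hnn hmk hnk hmn hx hy)

end InvariantForm

theorem wallach_bracket_m1_m3_m2_m3_general
    {K : Type*} [Field K]
    {g : Type*} [LieRing g] [LieAlgebra K g] [Module.Finite K g]
    (k m1 m2 m3 : Submodule K g)
    (hspan : k ⊔ m1 ⊔ m2 ⊔ m3 = ⊤)
    (hk3 : ∀ x ∈ k, ∀ y ∈ m3, ⁅x, y⁆ ∈ m3)
    (h11 : ∀ x ∈ m1, ∀ y ∈ m1, ⁅x, y⁆ ∈ k)
    (h22 : ∀ x ∈ m2, ∀ y ∈ m2, ⁅x, y⁆ ∈ k)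
    (h33 : ∀ x ∈ m3, ∀ y ∈ m3, ⁅x, y⁆ ∈ k)
    (horth : ∀ i j : Fin 4, i ≠ j →
      ∀ x ∈ (![k, m1, m2, m3] i), ∀ y ∈ (![k, m1, m2, m3] j), killingForm K g x y = 0)
    (hnd : (killingForm K g).Nondegenerate) :
    (∀ x ∈ m1, ∀ y ∈ m3, ⁅x, y⁆ ∈ m2) ∧ (∀ x ∈ m2, ∀ y ∈ m3, ⁅x, y⁆ ∈ m1) := by
  set B := killingForm K g
  have hinv : B.lieInvariant g := LieModule.traceForm_lieInvariant K g g
  have hrefl : B.IsRefl := (LieModule.traceForm_isSymm K g g).isRefl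
  have ortho (i j : Fin 4) (hij : i ≠ j) :
      ![k, m1, m2, m3] j ≤ B.orthogonal (![k, m1, m2, m3] i) :=
    fun y hy x hx => horth i j hij x hx y hy
  have h10 : m1 ≤ B.orthogonal k := ortho 0 1 (by decide)
  have h20 : m2 ≤ B.orthogonal k := ortho 0 2 (by decide)
  have h30 : m3 ≤ B.orthogonal k := ortho 0 3 (by decide)
  have h13 : m1 ≤ B.orthogonal m3 := ortho 3 1 (by decide)
  have h23 : m2 ≤ B.orthogonal m3 := ortho 3 2 (by decide)
  have h21 : m2 ≤ B.orthogonal m1 := ortho 1 2 (by decide)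
  have h12 : m1 ≤ B.orthogonal m2 := ortho 2 1 (by decide)
  have hm2 : m2 ≤ B.orthogonal (k ⊔ m1 ⊔ m3) := by
    simpa only [orthogonal_sup] using le_inf (le_inf h20 h21) h23
  have hm1 : m1 ≤ B.orthogonal (k ⊔ m2 ⊔ m3) := by
    simpa only [orthogonal_sup] using le_inf (le_inf h10 h12) h13
  exact ⟨fun x hx y hy => lie_mem_of_orthogonal_sup_eq_top hinv hrefl hnd
      (by rw [← hspan]; ac_rfl) hk3 h11 h33 h10 h30 h13 hm2 hx hy,
    fun x hx y hy => lie_mem_of_orthogonal_sup_eq_top hinv hrefl hnd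
      (by rw [← hspan]; ac_rfl) hk3 h22 h33 h20 h30 h23 hm1 hx hy⟩

/-- In a finite-dimensional Lie algebra `g` over a char-zero field with nondegenerate
Killing form `B`, given a decomposition `g = k ⊕ m₁ ⊕ m₂ ⊕ m₃` into pairwise
`B`-orthogonal subspaces with `k` a subalgebra, `[k, mᵢ] ⊆ mᵢ` and `[mᵢ, mᵢ] ⊆ k`,
we have `[m₁, m₃] ⊆ m₂` and `[m₂, m₃] ⊆ m₁`. -/
theorem wallach_bracket_m1_m3_m2_m3
    {K : Type*} [Field K] [CharZero K]
    {g : Type*} [LieRing g] [LieAlgebra K g] [Module.Finite K g]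
    (k m1 m2 m3 : Submodule K g)
    (hindep : iSupIndep ![k, m1, m2, m3])
    (hspan : k ⊔ m1 ⊔ m2 ⊔ m3 = ⊤)
    (hsub : ∀ x ∈ k, ∀ y ∈ k, ⁅x, y⁆ ∈ k)
    (hk1 : ∀ x ∈ k, ∀ y ∈ m1, ⁅x, y⁆ ∈ m1)
    (hk2 : ∀ x ∈ k, ∀ y ∈ m2, ⁅x, y⁆ ∈ m2)
    (hk3 : ∀ x ∈ k, ∀ y ∈ m3, ⁅x, y⁆ ∈ m3)
    (h11 : ∀ x ∈ m1, ∀ y ∈ m1, ⁅x, y⁆ ∈ k)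
    (h22 : ∀ x ∈ m2, ∀ y ∈ m2, ⁅x, y⁆ ∈ k)
    (h33 : ∀ x ∈ m3, ∀ y ∈ m3, ⁅x, y⁆ ∈ k)
    (horth : ∀ i j : Fin 4, i ≠ j →
      ∀ x ∈ (![k, m1, m2, m3] i), ∀ y ∈ (![k, m1, m2, m3] j), killingForm K g x y = 0)
    (hnd : (killingForm K g).Nondegenerate) :
    (∀ x ∈ m1, ∀ y ∈ m3, ⁅x, y⁆ ∈ m2) ∧ (∀ x ∈ m2, ∀ y ∈ m3, ⁅x, y⁆ ∈ m1) :=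
  wallach_bracket_m1_m3_m2_m3_general k m1 m2 m3 hspan hk3 h11 h22 h33 horth hnd
end

section
/- Let g be a Lie algebra with invariant symmetric bilinear form B (B([X,Y],Z) = B(X,[Y,Z])) and a B-orthogonal generalized Wallach decomposition g = k ⊕ m₁ ⊕ m₂ ⊕ m₃. Define ⟨·,·⟩ = λ₁(−B)|m₁ + λ₂(−B)|m₂ + λ₃(−B)|m₃ on m = m₁⊕m₂⊕m₃. If [m₁, m₂] = 0, then for all X = X₁+X₂+X₃ and W = W₁+W₂+W₃ in m (Xᵢ, Wᵢ ∈ mᵢ), one has ⟨X, pr_m[W, X]⟩ = 0, i.e. ad-skew-symmetry of the metric at X holds, which is the geodesic-orbit condition. -/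
/-
Sorted by the summand it lies in, `[W, X]` has `k`-part `∑ [Wᵢ, Xᵢ]`, `m₁`-part
`[W₂, X₃] + [W₃, X₂]`, `m₂`-part `[W₁, X₃] + [W₃, X₁]`, and `m₃`-part `[W₁, X₂] + [W₂, X₁] = 0`.
By invariance `B(X₁, [W₂, X₃]) = B([X₁, W₂], X₃) = 0` and `B(X₁, [W₃, X₂]) = -B([X₁, X₂], W₃) = 0`,
symmetrically for `X₂`, so orthogonality of the summands gives `B(Xᵢ, [W, X]) = 0` for every `i`.
As `[W, X] - pr [W, X] ∈ k ⊥ mᵢ`, also `B(Xᵢ, pr [W, X]) = 0`, and `⟨X, ·⟩ = -∑ λᵢ B(Xᵢ, ·)` on `m`.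
-/

namespace LinearMap.BilinForm

variable {R M : Type*} [CommRing R] [AddCommGroup M] [Module R M]

theorem apply_eq_mul_neg_of_mem_iSup {ι : Type*} [DecidableEq ι] {B ip : LinearMap.BilinForm R M}
    {m : ι → Submodule R M} {lam : ι → R}
    (hdiag : ∀ i, ∀ u ∈ m i, ∀ v ∈ m i, ip u v = lam i * -B u v)
    (hcross : ∀ i j, i ≠ j → ∀ u ∈ m i, ∀ v ∈ m j, ip u v = 0)
    (horth : ∀ i j, i ≠ j → ∀ u ∈ m i, ∀ v ∈ m j, B u v = 0)
    {i : ι} {x : M} (hx : x ∈ m i) {p : M} (hp : p ∈ ⨆ j, m j) :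
    ip x p = lam i * -B x p := by
  induction hp using Submodule.iSup_induction' with
  | mem j p hp =>
    obtain rfl | hij := eq_or_ne i j
    · exact hdiag i x hx p hp
    · rw [hcross i j hij x hx p hp, horth i j hij x hx p hp, neg_zero, mul_zero]
  | zero => simp
  | add p q _ _ hp hq => rw [map_add, map_add, hp, hq]; ring

variable {L : Type*} [LieRing L] [LieAlgebra R L] {B : LinearMap.BilinForm R L}

theorem apply_lie_add_lie_eq_zero (hB : ∀ x y z : L, B ⁅x, y⁆ z = B x ⁅y, z⁆) {x u v : L}
    (hu : ⁅x, u⁆ = 0) (hv : ⁅x, v⁆ = 0) (y z : L) : B x (⁅u, y⁆ + ⁅z, v⁆) = 0 := by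
  rw [map_add, ← hB, hu, ← lie_skew, map_neg, ← hB, hv]
  simp

end LinearMap.BilinForm

theorem lie_add_add_eq_graded {L : Type*} [LieRing L] (w₁ w₂ w₃ x₁ x₂ x₃ : L) :
    ⁅w₁ + w₂ + w₃, x₁ + x₂ + x₃⁆ = (⁅w₁, x₁⁆ + ⁅w₂, x₂⁆ + ⁅w₃, x₃⁆) + (⁅w₂, x₃⁆ + ⁅w₃, x₂⁆) +
      (⁅w₁, x₃⁆ + ⁅w₃, x₁⁆) + (⁅w₁, x₂⁆ + ⁅w₂, x₁⁆) := by
  simp only [add_lie, lie_add]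
  abel

theorem wallach_apply_lie_eq_zero {g : Type*} [LieRing g] [LieAlgebra ℝ g]
    (B : LinearMap.BilinForm ℝ g) (hBinv : ∀ x y z : g, B ⁅x, y⁆ z = B x ⁅y, z⁆)
    (k m1 m2 m3 : Submodule ℝ g)
    (h11 : ∀ x ∈ m1, ∀ y ∈ m1, ⁅x, y⁆ ∈ k)
    (h22 : ∀ x ∈ m2, ∀ y ∈ m2, ⁅x, y⁆ ∈ k)
    (h33 : ∀ x ∈ m3, ∀ y ∈ m3, ⁅x, y⁆ ∈ k)
    (h12 : ∀ x ∈ m1, ∀ y ∈ m2, ⁅x, y⁆ = 0)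
    (h13 : ∀ x ∈ m1, ∀ y ∈ m3, ⁅x, y⁆ ∈ m2)
    (h23 : ∀ x ∈ m2, ∀ y ∈ m3, ⁅x, y⁆ ∈ m1)
    (horth : ∀ i j : Fin 4, i ≠ j →
      ∀ x ∈ (![k, m1, m2, m3] i), ∀ y ∈ (![k, m1, m2, m3] j), B x y = 0)
    {X1 X2 X3 W1 W2 W3 : g} (hX1 : X1 ∈ m1) (hX2 : X2 ∈ m2) (hX3 : X3 ∈ m3)
    (hW1 : W1 ∈ m1) (hW2 : W2 ∈ m2) (hW3 : W3 ∈ m3) :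
    B X1 ⁅W1 + W2 + W3, X1 + X2 + X3⁆ = 0 ∧ B X2 ⁅W1 + W2 + W3, X1 + X2 + X3⁆ = 0 ∧
      B X3 ⁅W1 + W2 + W3, X1 + X2 + X3⁆ = 0 := by
  have h21 : ∀ x ∈ m2, ∀ y ∈ m1, ⁅x, y⁆ = 0 := fun x hx y hy => by
    rw [← lie_skew, h12 y hy x hx, neg_zero]
  have hZk : ⁅W1, X1⁆ + ⁅W2, X2⁆ + ⁅W3, X3⁆ ∈ k :=
    add_mem (add_mem (h11 W1 hW1 X1 hX1) (h22 W2 hW2 X2 hX2)) (h33 W3 hW3 X3 hX3)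
  have hZ1 : ⁅W2, X3⁆ + ⁅W3, X2⁆ ∈ m1 := by
    refine add_mem (h23 W2 hW2 X3 hX3) ?_
    rw [← lie_skew]
    exact neg_mem (h23 X2 hX2 W3 hW3)
  have hZ2 : ⁅W1, X3⁆ + ⁅W3, X1⁆ ∈ m2 := by
    refine add_mem (h13 W1 hW1 X3 hX3) ?_
    rw [← lie_skew]
    exact neg_mem (h13 X1 hX1 W3 hW3)
  rw [lie_add_add_eq_graded, h12 W1 hW1 X2 hX2, h21 W2 hW2 X1 hX1, add_zero, add_zero]
  refine ⟨?_, ?_, ?_⟩ <;> rw [map_add, map_add]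
  · rw [horth 1 0 (by decide) X1 hX1 _ hZk, horth 1 2 (by decide) X1 hX1 _ hZ2,
      B.apply_lie_add_lie_eq_zero hBinv (h12 X1 hX1 W2 hW2) (h12 X1 hX1 X2 hX2), add_zero,
      add_zero]
  · rw [horth 2 0 (by decide) X2 hX2 _ hZk, horth 2 1 (by decide) X2 hX2 _ hZ1,
      B.apply_lie_add_lie_eq_zero hBinv (h21 X2 hX2 W1 hW1) (h21 X2 hX2 X1 hX1), add_zero,
      add_zero]
  · rw [horth 3 0 (by decide) X3 hX3 _ hZk, horth 3 1 (by decide) X3 hX3 _ hZ1,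
      horth 3 2 (by decide) X3 hX3 _ hZ2, add_zero, add_zero]

theorem wallach_go_condition_general
    {g : Type*} [LieRing g] [LieAlgebra ℝ g]
    (B : LinearMap.BilinForm ℝ g)
    (hBinv : ∀ x y z : g, B ⁅x, y⁆ z = B x ⁅y, z⁆)
    (k m1 m2 m3 : Submodule ℝ g)
    (h11 : ∀ x ∈ m1, ∀ y ∈ m1, ⁅x, y⁆ ∈ k)
    (h22 : ∀ x ∈ m2, ∀ y ∈ m2, ⁅x, y⁆ ∈ k)
    (h33 : ∀ x ∈ m3, ∀ y ∈ m3, ⁅x, y⁆ ∈ k)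
    (h12 : ∀ x ∈ m1, ∀ y ∈ m2, ⁅x, y⁆ = 0)
    (h13 : ∀ x ∈ m1, ∀ y ∈ m3, ⁅x, y⁆ ∈ m2)
    (h23 : ∀ x ∈ m2, ∀ y ∈ m3, ⁅x, y⁆ ∈ m1)
    (horth : ∀ i j : Fin 4, i ≠ j →
      ∀ x ∈ (![k, m1, m2, m3] i), ∀ y ∈ (![k, m1, m2, m3] j), B x y = 0)
    (lam1 lam2 lam3 : ℝ)
    (ip : LinearMap.BilinForm ℝ g)
    (hip1 : ∀ u ∈ m1, ∀ v ∈ m1, ip u v = lam1 * (-(B u v)))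
    (hip2 : ∀ u ∈ m2, ∀ v ∈ m2, ip u v = lam2 * (-(B u v)))
    (hip3 : ∀ u ∈ m3, ∀ v ∈ m3, ip u v = lam3 * (-(B u v)))
    (hipcross : ∀ i j : Fin 3, i ≠ j →
      ∀ u ∈ (![m1, m2, m3] i), ∀ v ∈ (![m1, m2, m3] j), ip u v = 0)
    (pr : g →ₗ[ℝ] g)
    (hpr_mem : ∀ x : g, pr x ∈ m1 ⊔ m2 ⊔ m3)
    (hpr_fix : ∀ x : g, x - pr x ∈ k)
    (X1 X2 X3 W1 W2 W3 : g)
    (hX1 : X1 ∈ m1) (hX2 : X2 ∈ m2) (hX3 : X3 ∈ m3)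
    (hW1 : W1 ∈ m1) (hW2 : W2 ∈ m2) (hW3 : W3 ∈ m3) :
    ip (X1 + X2 + X3) (pr ⁅W1 + W2 + W3, X1 + X2 + X3⁆) = 0 := by
  set Z := ⁅W1 + W2 + W3, X1 + X2 + X3⁆
  obtain ⟨hBZ1, hBZ2, hBZ3⟩ := wallach_apply_lie_eq_zero B hBinv k m1 m2 m3 h11 h22 h33 h12 h13
    h23 horth hX1 hX2 hX3 hW1 hW2 hW3
  have hBpr : ∀ i : Fin 3, ∀ x ∈ ![m1, m2, m3] i, B x (pr Z) = B x Z := fun i x hx => by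
    have := horth i.succ 0 (Fin.succ_ne_zero i) x hx _ (hpr_fix Z)
    rwa [map_sub, sub_eq_zero, eq_comm] at this
  have hip : ∀ i : Fin 3, ∀ x ∈ ![m1, m2, m3] i,
      ip x (pr Z) = ![lam1, lam2, lam3] i * -B x (pr Z) := fun i x hx =>
    LinearMap.BilinForm.apply_eq_mul_neg_of_mem_iSup (B := B) (m := ![m1, m2, m3])
      (fun i => by fin_cases i; exacts [hip1, hip2, hip3]) hipcross
      (fun i j hij => horth i.succ j.succ (by simpa using hij)) hx (by simpa using hpr_mem Z)
  rw [map_add, map_add, LinearMap.add_apply, LinearMap.add_apply, hip 0 X1 hX1, hip 1 X2 hX2,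
    hip 2 X3 hX3, hBpr 0 X1 hX1, hBpr 1 X2 hX2, hBpr 2 X3 hX3, hBZ1, hBZ2, hBZ3]
  simp

/-- Let `g` be a real Lie algebra with an invariant nondegenerate symmetric
bilinear form `B` and a `B`-orthogonal generalized Wallach decomposition
`g = k ⊕ m₁ ⊕ m₂ ⊕ m₃` satisfying additionally `[m₁, m₂] = 0`.  Equip
`m = m₁ ⊔ m₂ ⊔ m₃` with `⟨·,·⟩ = λ₁(−B)|m₁ + λ₂(−B)|m₂ + λ₃(−B)|m₃`
(encoded by `ip`), and let `pr` be the `B`-orthogonal projection onto `m`.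
Then for every `X = X₁+X₂+X₃` and `W = W₁+W₂+W₃` in `m`, one has
`⟨X, pr[W, X]⟩ = 0` (the geodesic-orbit condition). -/
theorem wallach_go_condition
    {g : Type*} [LieRing g] [LieAlgebra ℝ g]
    (B : LinearMap.BilinForm ℝ g)
    (hBsymm : ∀ x y : g, B x y = B y x)
    (hBinv : ∀ x y z : g, B ⁅x, y⁆ z = B x ⁅y, z⁆)
    (hBnd : B.Nondegenerate)
    (k m1 m2 m3 : Submodule ℝ g)
    (hindep : iSupIndep ![k, m1, m2, m3])
    (hspan : k ⊔ m1 ⊔ m2 ⊔ m3 = ⊤)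
    (hsub : ∀ x ∈ k, ∀ y ∈ k, ⁅x, y⁆ ∈ k)
    (hk1 : ∀ x ∈ k, ∀ y ∈ m1, ⁅x, y⁆ ∈ m1)
    (hk2 : ∀ x ∈ k, ∀ y ∈ m2, ⁅x, y⁆ ∈ m2)
    (hk3 : ∀ x ∈ k, ∀ y ∈ m3, ⁅x, y⁆ ∈ m3)
    (h11 : ∀ x ∈ m1, ∀ y ∈ m1, ⁅x, y⁆ ∈ k)
    (h22 : ∀ x ∈ m2, ∀ y ∈ m2, ⁅x, y⁆ ∈ k)
    (h33 : ∀ x ∈ m3, ∀ y ∈ m3, ⁅x, y⁆ ∈ k)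
    (h12 : ∀ x ∈ m1, ∀ y ∈ m2, ⁅x, y⁆ = 0)
    (h13 : ∀ x ∈ m1, ∀ y ∈ m3, ⁅x, y⁆ ∈ m2)
    (h23 : ∀ x ∈ m2, ∀ y ∈ m3, ⁅x, y⁆ ∈ m1)
    (horth : ∀ i j : Fin 4, i ≠ j →
      ∀ x ∈ (![k, m1, m2, m3] i), ∀ y ∈ (![k, m1, m2, m3] j), B x y = 0)
    (lam1 lam2 lam3 : ℝ) (hlam1 : 0 < lam1) (hlam2 : 0 < lam2) (hlam3 : 0 < lam3)
    (ip : LinearMap.BilinForm ℝ g)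
    (hip1 : ∀ u ∈ m1, ∀ v ∈ m1, ip u v = lam1 * (-(B u v)))
    (hip2 : ∀ u ∈ m2, ∀ v ∈ m2, ip u v = lam2 * (-(B u v)))
    (hip3 : ∀ u ∈ m3, ∀ v ∈ m3, ip u v = lam3 * (-(B u v)))
    (hipcross : ∀ i j : Fin 3, i ≠ j →
      ∀ u ∈ (![m1, m2, m3] i), ∀ v ∈ (![m1, m2, m3] j), ip u v = 0)
    (pr : g →ₗ[ℝ] g)
    (hpr_mem : ∀ x : g, pr x ∈ m1 ⊔ m2 ⊔ m3)
    (hpr_fix : ∀ x : g, x - pr x ∈ k)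
    (X1 X2 X3 W1 W2 W3 : g)
    (hX1 : X1 ∈ m1) (hX2 : X2 ∈ m2) (hX3 : X3 ∈ m3)
    (hW1 : W1 ∈ m1) (hW2 : W2 ∈ m2) (hW3 : W3 ∈ m3) :
    ip (X1 + X2 + X3) (pr ⁅W1 + W2 + W3, X1 + X2 + X3⁆) = 0 :=
  wallach_go_condition_general B hBinv k m1 m2 m3 h11 h22 h33 h12 h13 h23 horth lam1 lam2 lam3 ip
    hip1 hip2 hip3 hipcross pr hpr_mem hpr_fix X1 X2 X3 W1 W2 W3 hX1 hX2 hX3 hW1 hW2 hW3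
end

section
/- Let g be a Lie algebra with invariant nondegenerate symmetric bilinear form B and a B-orthogonal generalized Wallach decomposition g = k ⊕ m₁ ⊕ m₂ ⊕ m₃. Fix c ∈ ℝ and equip m = m₁⊕m₂⊕m₃ with ⟨·,·⟩ = (−B)|m₁ + (−B)|m₂ + c(−B)|m₃. Then for all U₁ ∈ m₁, U₂ ∈ m₂, U₃ ∈ m₃ and all W ∈ m: (1−c)·(−B)(W, [U₁,U₃] + [U₂,U₃]) + ⟨pr_m[W,U₁], U₂⟩ + ⟨pr_m[W,U₁], U₃⟩ + ⟨pr_m[W,U₂], U₁⟩ + ⟨pr_m[W,U₂], U₃⟩ + ⟨pr_m[W,U₃], U₁⟩ + ⟨pr_m[W,U₃], U₂⟩ = 0. -/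
/-!
For `V ∈ mⱼ` and every `X ∈ g` one has `⟨pr X, V⟩ = λⱼ (−B)(X, V)` with `λ = (1, 1, c)`:
`X − pr X ∈ k` is `B`-orthogonal to `V`, and on `m` both forms see only the `mⱼ`-component.
By invariance every term of the identity then becomes a multiple of some `B(W, [Uᵢ, Uⱼ])`,
and the coefficients cancel by skew-symmetry of the bracket.
-/

namespace LinearMap.BilinForm

variable {R M : Type*} [CommRing R] [AddCommGroup M] [Module R M]
  {B ip : LinearMap.BilinForm R M}

theorem apply_eq_mul_apply_of_mem_iSup {ι : Type*} {N : ι → Submodule R M}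
    (hip : ∀ i j, i ≠ j → ∀ u ∈ N i, ∀ v ∈ N j, ip u v = 0)
    (hB : ∀ i j, i ≠ j → ∀ u ∈ N i, ∀ v ∈ N j, B u v = 0)
    {j : ι} {v : M} (hv : v ∈ N j) {a : R} (hj : ∀ u ∈ N j, ip u v = a * B u v)
    {u : M} (hu : u ∈ ⨆ i, N i) : ip u v = a * B u v := by
  refine Submodule.iSup_induction N (motive := fun u => ip u v = a * B u v) hu
    (fun i u hu => ?_) (by simp) fun x y hx hy => ?_
  · by_cases hij : i = j
    · subst hij
      exact hj u hu
    · rw [hip i j hij u hu v hv, hB i j hij u hu v hv, mul_zero]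
  · simp only [map_add, LinearMap.add_apply, hx, hy, mul_add]

theorem apply_proj_eq_mul_apply {K N : Submodule R M} {p : M → M}
    (hpN : ∀ x, p x ∈ N) (hpK : ∀ x, x - p x ∈ K) {v : M} {a : R}
    (hK : ∀ n ∈ K, B n v = 0) (hN : ∀ n ∈ N, ip n v = a * B n v) (x : M) :
    ip (p x) v = a * B x v := by
  have hBp : B (x - p x) v = 0 := hK _ (hpK x)
  rw [map_sub, LinearMap.sub_apply, sub_eq_zero] at hBp
  rw [hN _ (hpN x), hBp]

end LinearMap.BilinForm

open LinearMap.BilinForm in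
theorem wallach_geodesic_identity_general
    {g : Type*} [LieRing g] [LieAlgebra ℝ g]
    (B : LinearMap.BilinForm ℝ g)
    (hBinv : ∀ x y z : g, B ⁅x, y⁆ z = B x ⁅y, z⁆)
    (k m1 m2 m3 : Submodule ℝ g)
    (horth : ∀ i j : Fin 4, i ≠ j →
      ∀ x ∈ (![k, m1, m2, m3] i), ∀ y ∈ (![k, m1, m2, m3] j), B x y = 0)
    (c : ℝ)
    (ip : LinearMap.BilinForm ℝ g)
    (hip1 : ∀ u ∈ m1, ∀ v ∈ m1, ip u v = -(B u v))
    (hip2 : ∀ u ∈ m2, ∀ v ∈ m2, ip u v = -(B u v))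
    (hip3 : ∀ u ∈ m3, ∀ v ∈ m3, ip u v = c * (-(B u v)))
    (hipcross : ∀ i j : Fin 3, i ≠ j →
      ∀ u ∈ (![m1, m2, m3] i), ∀ v ∈ (![m1, m2, m3] j), ip u v = 0)
    (pr : g →ₗ[ℝ] g)
    (hpr_mem : ∀ x : g, pr x ∈ m1 ⊔ m2 ⊔ m3)
    (hpr_fix : ∀ x : g, x - pr x ∈ k)
    (U1 U2 U3 : g) (hU1 : U1 ∈ m1) (hU2 : U2 ∈ m2) (hU3 : U3 ∈ m3)
    (W : g) :
    (1 - c) * (-(B W (⁅U1, U3⁆ + ⁅U2, U3⁆)))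
      + ip (pr ⁅W, U1⁆) U2 + ip (pr ⁅W, U1⁆) U3
      + ip (pr ⁅W, U2⁆) U1 + ip (pr ⁅W, U2⁆) U3
      + ip (pr ⁅W, U3⁆) U1 + ip (pr ⁅W, U3⁆) U2 = 0 := by
  have hBcross : ∀ i j : Fin 3, i ≠ j →
      ∀ u ∈ ![m1, m2, m3] i, ∀ v ∈ ![m1, m2, m3] j, B u v = 0 :=
    fun i j hij => horth i.succ j.succ (Fin.succ_injective _ |>.ne hij)
  have hproj : ∀ j : Fin 3, ∀ v ∈ ![m1, m2, m3] j, ∀ a : ℝ,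
      (∀ u ∈ ![m1, m2, m3] j, ip u v = a * B u v) → ∀ x, ip (pr x) v = a * B x v :=
    fun j v hv a hj => apply_proj_eq_mul_apply hpr_mem hpr_fix
      (fun n hn => horth 0 j.succ (Fin.succ_ne_zero j).symm n hn v hv)
      (fun u hu => apply_eq_mul_apply_of_mem_iSup hipcross hBcross hv hj
        (by rwa [iSup_fin_three]))
  have hpr1 := hproj 0 U1 hU1 (-1) fun u hu => by rw [hip1 u hu U1 hU1]; ring
  have hpr2 := hproj 1 U2 hU2 (-1) fun u hu => by rw [hip2 u hu U2 hU2]; ring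
  have hpr3 := hproj 2 U3 hU3 (-c) fun u hu => by rw [hip3 u hu U3 hU3]; ring
  simp only [hpr1, hpr2, hpr3, hBinv, map_add, map_neg,
    ← lie_skew U3 U1, ← lie_skew U3 U2, ← lie_skew U2 U1]
  ring

/-- Let `g` be a real Lie algebra with an invariant nondegenerate symmetric
bilinear form `B` and a `B`-orthogonal generalized Wallach decomposition
`g = k ⊕ m₁ ⊕ m₂ ⊕ m₃`.  Equip `m = m₁ ⊔ m₂ ⊔ m₃` with the inner product
`⟨·,·⟩ = (−B)|m₁ + (−B)|m₂ + c(−B)|m₃` (encoded by the bilinear form `ip`),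
and let `pr` be the `B`-orthogonal projection onto `m` (the projection along
`k`).  Then for all `U₁ ∈ m₁`, `U₂ ∈ m₂`, `U₃ ∈ m₃` and all `W ∈ m`, the
stated combination vanishes. -/
theorem wallach_geodesic_identity
    {g : Type*} [LieRing g] [LieAlgebra ℝ g]
    (B : LinearMap.BilinForm ℝ g)
    (hBsymm : ∀ x y : g, B x y = B y x)
    (hBinv : ∀ x y z : g, B ⁅x, y⁆ z = B x ⁅y, z⁆)
    (hBnd : B.Nondegenerate)
    (k m1 m2 m3 : Submodule ℝ g)
    (hindep : iSupIndep ![k, m1, m2, m3])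
    (hspan : k ⊔ m1 ⊔ m2 ⊔ m3 = ⊤)
    (hsub : ∀ x ∈ k, ∀ y ∈ k, ⁅x, y⁆ ∈ k)
    (hk1 : ∀ x ∈ k, ∀ y ∈ m1, ⁅x, y⁆ ∈ m1)
    (hk2 : ∀ x ∈ k, ∀ y ∈ m2, ⁅x, y⁆ ∈ m2)
    (hk3 : ∀ x ∈ k, ∀ y ∈ m3, ⁅x, y⁆ ∈ m3)
    (h11 : ∀ x ∈ m1, ∀ y ∈ m1, ⁅x, y⁆ ∈ k)
    (h22 : ∀ x ∈ m2, ∀ y ∈ m2, ⁅x, y⁆ ∈ k)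
    (h33 : ∀ x ∈ m3, ∀ y ∈ m3, ⁅x, y⁆ ∈ k)
    (h12 : ∀ x ∈ m1, ∀ y ∈ m2, ⁅x, y⁆ ∈ m3)
    (h13 : ∀ x ∈ m1, ∀ y ∈ m3, ⁅x, y⁆ ∈ m2)
    (h23 : ∀ x ∈ m2, ∀ y ∈ m3, ⁅x, y⁆ ∈ m1)
    (horth : ∀ i j : Fin 4, i ≠ j →
      ∀ x ∈ (![k, m1, m2, m3] i), ∀ y ∈ (![k, m1, m2, m3] j), B x y = 0)
    (c : ℝ)
    (ip : LinearMap.BilinForm ℝ g)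
    (hip1 : ∀ u ∈ m1, ∀ v ∈ m1, ip u v = -(B u v))
    (hip2 : ∀ u ∈ m2, ∀ v ∈ m2, ip u v = -(B u v))
    (hip3 : ∀ u ∈ m3, ∀ v ∈ m3, ip u v = c * (-(B u v)))
    (hipcross : ∀ i j : Fin 3, i ≠ j →
      ∀ u ∈ (![m1, m2, m3] i), ∀ v ∈ (![m1, m2, m3] j), ip u v = 0)
    (pr : g →ₗ[ℝ] g)
    (hpr_mem : ∀ x : g, pr x ∈ m1 ⊔ m2 ⊔ m3)
    (hpr_fix : ∀ x : g, x - pr x ∈ k)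
    (U1 U2 U3 : g) (hU1 : U1 ∈ m1) (hU2 : U2 ∈ m2) (hU3 : U3 ∈ m3)
    (W : g) (hW : W ∈ m1 ⊔ m2 ⊔ m3) :
    (1 - c) * (-(B W (⁅U1, U3⁆ + ⁅U2, U3⁆)))
      + ip (pr ⁅W, U1⁆) U2 + ip (pr ⁅W, U1⁆) U3
      + ip (pr ⁅W, U2⁆) U1 + ip (pr ⁅W, U2⁆) U3
      + ip (pr ⁅W, U3⁆) U1 + ip (pr ⁅W, U3⁆) U2 = 0 :=
  wallach_geodesic_identity_general B hBinv k m1 m2 m3 horth c ip hip1 hip2 hip3 hipcross pr hpr_mem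
    hpr_fix U1 U2 U3 hU1 hU2 hU3 W
end
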